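/- Let a, b ∈ 𝔽_q^× and c ∈ ℂ^×. If Kl_{ta}^n(ψ; b_1,…,b_n) = c · Kl_{tb}^n(ψ; b_1,…,b_n) for every t ∈ 𝔽_q^×, then c = 1 and a = b. -/

import Mathlib

/-- The generalized Kloosterman sum Kl_a^n(ψ; b₁, …, b_n)
= ∑_{x₁^{b₁} ⋯ x_n^{b_n} = a} ψ(x₁ + ⋯ + x_n). -/
noncomputable def Kl {F : Type*} [Field F] [Fintype F] [DecidableEq F]
    (ψ : AddChar F ℂ) (n : ℕ) (b : Fin n → ℕ) (a : F) : ℂ :=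
  ∑ x ∈ Finset.univ.filter (fun x : Fin n → F => ∏ i, x i ^ b i = a), ψ (∑ i, x i)

/-!
Multiplying by a multiplicative character `χ` and summing over `t` turns `t ↦ Kl(t a)` into
`χ(a)⁻¹ ∏ᵢ g(χ^{bᵢ}, ψ)`, a Mellin transform that factors because both `∏ xᵢ^{bᵢ}` and
`ψ(∑ xᵢ)` split over the coordinates. Over a finite field these Gauss sums never vanish, so the
hypothesis gives `χ(a)⁻¹ = c χ(a')⁻¹` for every `χ`: the trivial character forces `c = 1`, and
since characters separate the points of `𝔽_q^×`, `a = a'`.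
-/

open Finset

theorem AddChar.map_sum_eq_prod {ι A M : Type*} [AddCommMonoid A] [CommMonoid M]
    (ψ : AddChar A M) (s : Finset ι) (f : ι → A) : ψ (∑ i ∈ s, f i) = ∏ i ∈ s, ψ (f i) := by
  classical
  induction s using Finset.induction_on with
  | empty => simp
  | insert i s hi ih => rw [sum_insert hi, prod_insert hi, AddChar.map_add_eq_mul, ih]

namespace MulChar

variable {M R : Type*} [CommMonoid M] [Fintype M] [CommRing R]

theorem sum_units_mul_eq_sum_mul [DecidableEq M] (χ : MulChar M R) (f : M → R) :
    ∑ u : Mˣ, χ u * f u = ∑ m : M, χ m * f m := by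
  refine Fintype.sum_of_injective _ Units.val_injective _ _ (fun m hm => ?_) fun _ => rfl
  rw [χ.map_nonunit fun ⟨u, hu⟩ => hm ⟨u, hu⟩, zero_mul]

theorem units_eq_of_forall_apply_eq [Nontrivial R]
    [HasEnoughRootsOfUnity R (Monoid.exponent Mˣ)] {u v : Mˣ}
    (h : ∀ χ : MulChar M R, χ u = χ v) : u = v := by
  by_contra huv
  obtain ⟨χ, hχ⟩ := exists_apply_ne_one_of_hasEnoughRootsOfUnity M R
    (a := ((u * v⁻¹ : Mˣ) : M)) (by rwa [Ne, Units.val_eq_one, mul_inv_eq_one])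
  apply hχ
  rw [Units.val_mul, map_mul, h, ← map_mul, ← Units.val_mul, mul_inv_cancel, Units.val_one,
    map_one]

end MulChar

theorem gaussSum_ne_zero_of_ne_one {R R' : Type*} [Field R] [Fintype R] [Field R'] [CharZero R']
    (χ : MulChar R R') {ψ : AddChar R R'} (hψ : ψ ≠ 1) : gaussSum χ ψ ≠ 0 := by
  by_cases hχ : χ = 1
  · rw [hχ, gaussSum_one_left hψ]
    exact neg_ne_zero.2 one_ne_zero
  · exact gaussSum_ne_zero_of_nontrivial (Nat.cast_ne_zero.2 Fintype.card_ne_zero) hχ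
      (AddChar.IsPrimitive.of_ne_one hψ)

section Kloosterman

variable {F : Type*} [Field F] [Fintype F] [DecidableEq F]
  (ψ : AddChar F ℂ) (n : ℕ) {b : Fin n → ℕ} (χ : MulChar F ℂ)

theorem sum_mulChar_mul_Kl (hb : ∀ i, 0 < b i) :
    ∑ d : F, χ d * Kl ψ n b d = ∏ i, gaussSum (χ ^ b i) ψ := by
  have hfactor (x : Fin n → F) :
      χ (∏ i, x i ^ b i) * ψ (∑ i, x i) = ∏ i, (χ ^ b i) (x i) * ψ (x i) := by
    simp only [map_prod, map_pow, MulChar.pow_apply' _ (hb _).ne', ψ.map_sum_eq_prod,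
      prod_mul_distrib]
  calc ∑ d : F, χ d * Kl ψ n b d
      = ∑ d : F, ∑ x ∈ univ.filter (fun x : Fin n → F => ∏ i, x i ^ b i = d),
          χ (∏ i, x i ^ b i) * ψ (∑ i, x i) := by
        refine sum_congr rfl fun d _ => ?_
        rw [Kl, mul_sum]
        exact sum_congr rfl fun x hx => by rw [(mem_filter.1 hx).2]
    _ = ∑ x : Fin n → F, ∏ i, (χ ^ b i) (x i) * ψ (x i) := by
        rw [sum_fiberwise]
        simp only [hfactor]
    _ = ∏ i, gaussSum (χ ^ b i) ψ := by
        simp only [gaussSum, prod_univ_sum, Fintype.piFinset_univ]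

theorem sum_units_mulChar_mul_Kl_mul (hb : ∀ i, 0 < b i) (a : Fˣ) :
    ∑ t : Fˣ, χ t * Kl ψ n b ((t * a : Fˣ) : F) = χ ↑a⁻¹ * ∏ i, gaussSum (χ ^ b i) ψ := by
  rw [← sum_mulChar_mul_Kl ψ n χ hb, ← MulChar.sum_units_mul_eq_sum_mul χ (Kl ψ n b), mul_sum]
  refine Fintype.sum_equiv (Equiv.mulRight a) _ _ fun t => ?_
  dsimp only [Equiv.coe_mulRight]
  rw [← mul_assoc, ← map_mul, ← Units.val_mul, mul_comm a⁻¹, mul_inv_cancel_right]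

end Kloosterman

theorem stmt7_general {F : Type*} [Field F] [Fintype F] [DecidableEq F]
    (ψ : AddChar F ℂ) (hψ : ψ ≠ 1) (n : ℕ)
    (b : Fin n → ℕ) (hb : ∀ i, 0 < b i)
    (a a' : Fˣ) (c : ℂ)
    (h : ∀ t : Fˣ, Kl ψ n b ((t * a : Fˣ) : F) = c * Kl ψ n b ((t * a' : Fˣ) : F)) :
    c = 1 ∧ a = a' := by
  have hχ (χ : MulChar F ℂ) : χ ↑a⁻¹ = c * χ ↑a'⁻¹ := by
    have hsum : ∑ t : Fˣ, χ t * Kl ψ n b ((t * a : Fˣ) : F)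
        = c * ∑ t : Fˣ, χ t * Kl ψ n b ((t * a' : Fˣ) : F) := by
      simp only [h, mul_sum, mul_left_comm c]
    rw [sum_units_mulChar_mul_Kl_mul ψ n χ hb, sum_units_mulChar_mul_Kl_mul ψ n χ hb,
      ← mul_assoc] at hsum
    exact mul_right_cancel₀ (prod_ne_zero_iff.2 fun i _ => gaussSum_ne_zero_of_ne_one _ hψ) hsum
  have hc : c = 1 := by simpa only [MulChar.one_apply_coe, mul_one] using (hχ 1).symm
  refine ⟨hc, inv_injective (MulChar.units_eq_of_forall_apply_eq (R := ℂ) fun χ => ?_)⟩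
  simpa only [hc, one_mul] using hχ χ

/-- If Kl_{ta}^n(ψ; b₁,…,b_n) = c · Kl_{tb}^n(ψ; b₁,…,b_n) for every t ∈ 𝔽_q^×,
then c = 1 and a = b. -/
theorem stmt7 {F : Type*} [Field F] [Fintype F] [DecidableEq F]
    (ψ : AddChar F ℂ) (hψ : ψ ≠ 1) (n : ℕ) (hn : 0 < n)
    (b : Fin n → ℕ) (hb : ∀ i, 0 < b i)
    (a a' : Fˣ) (c : ℂ) (hc : c ≠ 0)
    (h : ∀ t : Fˣ, Kl ψ n b ((t * a : Fˣ) : F) = c * Kl ψ n b ((t * a' : Fˣ) : F)) :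
    c = 1 ∧ a = a' :=
  stmt7_general ψ hψ n b hb a a' c h
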